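/- For a single-input, single-output network of depth L whose layers each apply one affine map followed by a piecewise linear activation with at most k pieces, the composed function ℝ → ℝ is piecewise linear with at most k^L pieces. -/

import Mathlib

/-- `f` is piecewise linear with at most `m` affine pieces on intervals partitioning `ℝ`. -/
def PiecewiseLinearWith (f : ℝ → ℝ) (m : ℕ) : Prop :=
  ∃ P : Finset (Set ℝ), P.card ≤ m ∧
    (⋃₀ (P : Set (Set ℝ)) = Set.univ) ∧
    ((P : Set (Set ℝ)).Pairwise Disjoint) ∧
    (∀ I ∈ P, I.OrdConnected) ∧
    (∀ I ∈ P, ∃ a b : ℝ, ∀ x ∈ I, f x = a * x + b)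

/-! Composing a function with `m` pieces and one with `n` pieces gives at most `m * n` pieces:
the sets `I ∩ f⁻¹' J`, for pieces `I` of `f` and `J` of `g`, partition `ℝ`, `g ∘ f` is affine on
each of them, and each is an interval because `f` is affine, hence monotone or antitone, on `I`.
An affine layer has one piece, so by induction a depth-`L` network has at most `k ^ L` pieces. -/

open Set

lemma Set.OrdConnected.inter_preimage_of_eqOn_affine {f : ℝ → ℝ} {I J : Set ℝ} {a b : ℝ}
    (hI : I.OrdConnected) (hJ : J.OrdConnected) (hf : EqOn f (fun x => a * x + b) I) :
    (I ∩ f ⁻¹' J).OrdConnected := by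
  rw [hf.inter_preimage_eq]
  refine hI.inter ?_
  rcases le_total 0 a with ha | ha
  · exact hJ.preimage_mono fun x y hxy => by nlinarith
  · exact hJ.preimage_anti fun x y hxy => by nlinarith

lemma sUnion_image_inter_preimage_eq_univ {α β : Type*} {P : Set (Set α)} {Q : Set (Set β)}
    (hP : ⋃₀ P = univ) (hQ : ⋃₀ Q = univ) (f : α → β) :
    ⋃₀ ((fun p : Set α × Set β => p.1 ∩ f ⁻¹' p.2) '' P ×ˢ Q) = univ := by
  rw [sUnion_eq_univ_iff] at hP hQ ⊢
  intro x
  obtain ⟨I, hI, hxI⟩ := hP x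
  obtain ⟨J, hJ, hxJ⟩ := hQ (f x)
  exact ⟨I ∩ f ⁻¹' J, ⟨(I, J), ⟨hI, hJ⟩, rfl⟩, hxI, hxJ⟩

lemma pairwise_disjoint_image_inter_preimage {α β : Type*} {P : Set (Set α)} {Q : Set (Set β)}
    (hP : P.Pairwise Disjoint) (hQ : Q.Pairwise Disjoint) (f : α → β) :
    ((fun p : Set α × Set β => p.1 ∩ f ⁻¹' p.2) '' P ×ˢ Q).Pairwise Disjoint := by
  rintro _ ⟨⟨I, J⟩, ⟨hI, hJ⟩, rfl⟩ _ ⟨⟨I', J'⟩, ⟨hI', hJ'⟩, rfl⟩ hne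
  rw [Set.disjoint_left]
  rintro x ⟨hxI, hxJ⟩ ⟨hxI', hxJ'⟩
  have hII' : I = I' := hP.eq hI hI' (not_disjoint_iff.2 ⟨x, hxI, hxI'⟩)
  have hJJ' : J = J' := hQ.eq hJ hJ' (not_disjoint_iff.2 ⟨f x, hxJ, hxJ'⟩)
  exact hne (by rw [hII', hJJ'])

namespace PiecewiseLinearWith

lemma affine (a b : ℝ) : PiecewiseLinearWith (fun x => a * x + b) 1 :=
  ⟨{univ}, by simp, by simp, by simp, by simp [ordConnected_univ],
    fun _ _ => ⟨a, b, fun _ _ => rfl⟩⟩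

lemma comp {f g : ℝ → ℝ} {m n : ℕ} (hg : PiecewiseLinearWith g n)
    (hf : PiecewiseLinearWith f m) : PiecewiseLinearWith (g ∘ f) (m * n) := by
  classical
  obtain ⟨P, hPcard, hPcover, hPdisj, hPconn, hPaff⟩ := hf
  obtain ⟨Q, hQcard, hQcover, hQdisj, hQconn, hQaff⟩ := hg
  refine ⟨(P ×ˢ Q).image fun p => p.1 ∩ f ⁻¹' p.2, ?_, ?_, ?_, ?_, ?_⟩
  · calc ((P ×ˢ Q).image fun p => p.1 ∩ f ⁻¹' p.2).card ≤ (P ×ˢ Q).card := Finset.card_image_le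
      _ = P.card * Q.card := Finset.card_product P Q
      _ ≤ m * n := Nat.mul_le_mul hPcard hQcard
  · simpa only [Finset.coe_image, Finset.coe_product]
      using sUnion_image_inter_preimage_eq_univ hPcover hQcover f
  · simpa only [Finset.coe_image, Finset.coe_product]
      using pairwise_disjoint_image_inter_preimage hPdisj hQdisj f
  all_goals
    simp only [Finset.mem_image, Finset.mem_product]
    rintro _ ⟨⟨I, J⟩, ⟨hI, hJ⟩, rfl⟩
    obtain ⟨a, b, hf⟩ := hPaff I hI
  · exact (hPconn I hI).inter_preimage_of_eqOn_affine (hQconn J hJ) hf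
  · obtain ⟨a', b', hg⟩ := hQaff J hJ
    refine ⟨a' * a, a' * b + b', fun x ⟨hxI, hxJ⟩ => ?_⟩
    rw [Function.comp_apply, hg (f x) hxJ, hf x hxI]
    ring

end PiecewiseLinearWith

theorem network_at_most_k_pow_L_pieces (L k : ℕ)
    (σ : ℕ → ℝ → ℝ) (w c : ℕ → ℝ)
    (hσ : ∀ i < L, PiecewiseLinearWith (σ i) k)
    (net : ℕ → ℝ → ℝ)
    (hnet0 : net 0 = id)
    (hnet : ∀ i < L, net (i + 1) = fun x => σ i (w i * net i x + c i)) :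
    PiecewiseLinearWith (net L) (k ^ L) := by
  suffices h : ∀ i ≤ L, PiecewiseLinearWith (net i) (k ^ i) from h L le_rfl
  intro i
  induction i with
  | zero =>
    intro _
    have hid := PiecewiseLinearWith.affine 1 0
    simp only [one_mul, add_zero] at hid
    rwa [hnet0]
  | succ i ih =>
    intro hi
    have hlayer := (hσ i hi).comp
      ((PiecewiseLinearWith.affine (w i) (c i)).comp (ih (Nat.le_of_succ_le hi)))
    rw [mul_one, ← pow_succ] at hlayer
    rwa [hnet i hi]
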